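/- Let V be a 5-dimensional complex vector space with a fixed isomorphism ∧⁵V ≅ ℂ. For every nonzero vector v ∈ V, the quadratic form P_v on ∧²V defined by P_v(x) = v ∧ x ∧ x (viewed in ∧⁵V ≅ ℂ) has rank exactly 6. -/

import Mathlib

open ExteriorAlgebra

namespace Stmt0

variable {V : Type*} [AddCommGroup V] [Module ℂ V]

theorem iota_mem (v : V) : (ι ℂ v : ExteriorAlgebra ℂ V) ∈ ⋀[ℂ]^1 V := by
  simpa only [pow_one] using LinearMap.mem_range_self _ v

/-- The degree-5 wedge `v ∧ x ∧ y` for `x y ∈ ⋀²V`, as an element of `⋀⁵V`. -/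
noncomputable def wedge5 (v : V) (x y : ⋀[ℂ]^2 V) : ⋀[ℂ]^5 V :=
  ⟨ι ℂ v * x.1 * y.1, by
    have h : (ι ℂ v * x.1) * y.1 ∈ ⋀[ℂ]^(1 + 2 + 2) V :=
      SetLike.mul_mem_graded (SetLike.mul_mem_graded (iota_mem v) x.2) y.2
    simpa using h⟩

/-- The symmetric bilinear form `B_v(x,y) = v ∧ x ∧ y` on `⋀²V`, obtained by composing the
wedge product with a fixed trivialization `e : ⋀⁵V ≃ ℂ`. -/
noncomputable def wedgeForm (e : (⋀[ℂ]^5 V) ≃ₗ[ℂ] ℂ) (v : V) :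
    (⋀[ℂ]^2 V) →ₗ[ℂ] (⋀[ℂ]^2 V) →ₗ[ℂ] ℂ :=
  LinearMap.mk₂ ℂ (fun x y => e (wedge5 v x y))
    (fun x x' y => by
      simp only [wedge5, ← map_add]
      congr 1
      ext
      simp [mul_add, add_mul])
    (fun c x y => by
      simp only [wedge5, ← map_smul]
      congr 1
      ext
      simp [Algebra.smul_mul_assoc])
    (fun x y y' => by
      simp only [wedge5, ← map_add]
      congr 1
      ext
      simp [mul_add])
    (fun c x y => by
      simp only [wedge5, ← map_smul]
      congr 1
      ext
      simp [Algebra.mul_smul_comm])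


end Stmt0

/-!
Choose a basis `b₀ = v, b₁, …, b₄` of `V`. The range of `B_v` is spanned by the functionals
`B_v(b_i ∧ b_j, ·)`; these vanish when `0 ∈ {i, j}`, so the six with `1 ≤ i < j ≤ 4` already
span. They are linearly independent because
`B_v(b_i ∧ b_j, b_k ∧ b_l) = e(b₀ ∧ b_i ∧ b_j ∧ b_k ∧ b_l)` is nonzero exactly when
`0, i, j, k, l` are distinct: against the six complementary pairs the pairing matrix is diagonal
with nonzero diagonal.
-/

theorem exteriorPower.ιMulti_ne_zero {K V : Type*} [Field K] [AddCommGroup V] [Module K V]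
    {n : ℕ} {w : Fin n → V} (hw : LinearIndependent K w) : ιMulti K n w ≠ 0 := by
  let c := Module.Basis.span hw
  have hc : Submodule.subtype _ ∘ c = w := funext fun i ↦ by simp [c, Module.Basis.span_apply]
  have hdet : alternatingMapLinearEquiv c.det (ιMulti K n c) ≠ 0 := by
    rw [alternatingMapLinearEquiv_apply_ιMulti, c.det_self]
    exact one_ne_zero
  rw [← hc, ← map_apply_ιMulti]
  refine fun h ↦ hdet ?_
  rw [map_injective_field (Submodule.subtype_injective _) (h.trans (map_zero _).symm), map_zero]

theorem exteriorPower.ιMulti_comp_eq_zero_iff {K V ι : Type*} [Field K] [AddCommGroup V]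
    [Module K V] {n : ℕ} {w : ι → V} (hw : LinearIndependent K w) (σ : Fin n → ι) :
    ιMulti K n (w ∘ σ) = 0 ↔ ¬Function.Injective σ :=
  ⟨fun h hσ ↦ ιMulti_ne_zero (hw.comp σ hσ) h, fun hσ ↦
    AlternatingMap.map_eq_zero_of_not_injective _ _ fun h ↦ hσ ((hw.injective.of_comp_iff σ).mp h)⟩

theorem exteriorPower.ιMulti_two_swap {R M : Type*} [CommRing R] [AddCommGroup M] [Module R M]
    (x : Fin 2 → M) : ιMulti R 2 ![x 1, x 0] = -ιMulti R 2 x := by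
  have : ![x 1, x 0] = x ∘ Equiv.swap 0 1 := by
    ext t
    fin_cases t <;> rfl
  rw [this, AlternatingMap.map_swap _ _ (by decide)]

theorem Module.exists_basis_fin_succ_apply_zero {K V : Type*} [Field K] [AddCommGroup V]
    [Module K V] {n : ℕ} (hn : finrank K V = n + 1) {v : V} (hv : v ≠ 0) :
    ∃ b : Basis (Fin (n + 1)) K V, b 0 = v := by
  have : FiniteDimensional K V := Module.finite_of_finrank_eq_succ hn
  have hs : LinearIndepOn K id {v} := LinearIndepOn.singleton hv
  let B := Basis.extend hs
  let f := B.indexEquiv (finBasisOfFinrankEq K V hn)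
  let v' : hs.extend (Set.subset_univ _) := ⟨v, hs.subset_extend _ rfl⟩
  refine ⟨B.reindex (f.trans (Equiv.swap (f v') 0)), ?_⟩
  simp [B, v']

theorem LinearIndependent.of_pairwise_apply_eq_zero {R M ι : Type*} [CommRing R]
    [NoZeroDivisors R] [AddCommGroup M] [Module R M] (f : ι → Module.Dual R M) (y : ι → M)
    (h1 : Pairwise fun i j ↦ f i (y j) = 0) (h2 : ∀ i, f i (y i) ≠ 0) :
    LinearIndependent R f := by
  refine linearIndependent_iff'.mpr fun s g hrel i hi ↦ ?_
  have aux (j : ι) (_ : j ∈ s) (hji : j ≠ i) : g j * f j (y i) = 0 := by simp [h1 hji]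
  simpa [s.sum_eq_single i aux (by lia), h2 i] using congr($hrel (y i))

namespace Stmt0

open Function Module

variable {V : Type*} [AddCommGroup V] [Module ℂ V]

local notation "ιMulti" => exteriorPower.ιMulti ℂ

theorem wedge5_ιMulti (v : V) (x y : Fin 2 → V) :
    wedge5 v (ιMulti 2 x) (ιMulti 2 y) = ιMulti 5 ![v, x 0, x 1, y 0, y 1] :=
  Subtype.ext <| by simp [wedge5, ExteriorAlgebra.ιMulti_apply, Matrix.vecTail, mul_assoc]

theorem wedgeForm_ιMulti (e : (⋀[ℂ]^5 V) ≃ₗ[ℂ] ℂ) (v : V) (x y : Fin 2 → V) :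
    wedgeForm e v (ιMulti 2 x) (ιMulti 2 y) = e (ιMulti 5 ![v, x 0, x 1, y 0, y 1]) :=
  congrArg e (wedge5_ιMulti v x y)

section Basis

variable (e : (⋀[ℂ]^5 V) ≃ₗ[ℂ] ℂ) (b : Basis (Fin 5) ℂ V)

theorem wedgeForm_basis_eq_zero_iff (σ τ : Fin 2 → Fin 5) :
    wedgeForm e (b 0) (ιMulti 2 (b ∘ σ)) (ιMulti 2 (b ∘ τ)) = 0 ↔
      ¬Injective ![0, σ 0, σ 1, τ 0, τ 1] := by
  rw [wedgeForm_ιMulti, e.map_eq_zero_iff,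
    ← exteriorPower.ιMulti_comp_eq_zero_iff b.linearIndependent]
  congr! 2
  ext t
  fin_cases t <;> rfl

theorem wedgeForm_basis_eq_zero {σ : Fin 2 → Fin 5} (hσ : ¬Injective ![0, σ 0, σ 1]) :
    wedgeForm e (b 0) (ιMulti 2 (b ∘ σ)) = 0 := by
  have h3 : ι ℂ (b 0) * (ιMulti 2 (b ∘ σ) : ExteriorAlgebra ℂ V) = 0 := by
    have := (exteriorPower.ιMulti_comp_eq_zero_iff b.linearIndependent ![0, σ 0, σ 1]).mpr hσ
    simpa [ExteriorAlgebra.ιMulti_apply, Matrix.vecTail, mul_assoc] using congrArg Subtype.val this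
  refine LinearMap.ext fun y ↦ ?_
  have h5 : wedge5 (b 0) (ιMulti 2 (b ∘ σ)) y = 0 :=
    Subtype.ext <| by simp only [wedge5, h3, zero_mul]; rfl
  simp [wedgeForm, h5]

/-- `pairs l.rev` is the pair complementary to `pairs l` in `{1, 2, 3, 4}`. -/
def pairs : Fin 6 → Fin 2 → Fin 5 := ![![1, 2], ![1, 3], ![1, 4], ![2, 3], ![2, 4], ![3, 4]]

theorem pairs_cover (σ : Fin 2 → Fin 5) :
    ¬Injective ![0, σ 0, σ 1] ∨ ∃ k, pairs k = σ ∨ pairs k = ![σ 1, σ 0] := by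
  revert σ
  decide

theorem injective_pairs_rev_iff (k l : Fin 6) :
    Injective ![0, pairs k 0, pairs k 1, pairs l.rev 0, pairs l.rev 1] ↔ k = l := by
  revert k l
  decide

theorem range_wedgeForm_basis :
    LinearMap.range (wedgeForm e (b 0)) =
      Submodule.span ℂ (Set.range fun k ↦ wedgeForm e (b 0) (ιMulti 2 (b ∘ pairs k))) := by
  refine le_antisymm ?_ (Submodule.span_le.mpr ?_)
  · rw [LinearMap.range_eq_map, ← exteriorPower.ιMulti_span_of_span ℂ 2 V b.span_eq,
      Submodule.map_span, Submodule.span_le]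
    rintro _ ⟨_, ⟨x, hx, rfl⟩, rfl⟩
    obtain ⟨σ, rfl⟩ : ∃ σ, b ∘ σ = x := by
      choose σ hσ using fun i ↦ hx (Set.mem_range_self i)
      exact ⟨σ, funext hσ⟩
    rcases pairs_cover σ with hσ | ⟨k, hk | hk⟩
    · simp [wedgeForm_basis_eq_zero e b hσ]
    · exact Submodule.subset_span ⟨k, by simp [hk]⟩
    · have hneg : wedgeForm e (b 0) (ιMulti 2 (b ∘ pairs k)) =
          -wedgeForm e (b 0) (ιMulti 2 (b ∘ σ)) := by
        rw [hk, ← map_neg, ← exteriorPower.ιMulti_two_swap]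
        rfl
      rw [← neg_neg (wedgeForm e (b 0) _), ← hneg]
      exact neg_mem (Submodule.subset_span ⟨k, rfl⟩)
  · rintro _ ⟨k, rfl⟩
    exact LinearMap.mem_range_self _ _

theorem linearIndependent_wedgeForm_basis_pairs :
    LinearIndependent ℂ fun k ↦ wedgeForm e (b 0) (ιMulti 2 (b ∘ pairs k)) :=
  .of_pairwise_apply_eq_zero _ (fun l ↦ ιMulti 2 (b ∘ pairs l.rev))
    (fun k l hkl ↦
      (wedgeForm_basis_eq_zero_iff e b _ _).mpr ((injective_pairs_rev_iff k l).not.mpr hkl))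
    (fun k ↦ by rw [Ne, wedgeForm_basis_eq_zero_iff, not_not, injective_pairs_rev_iff])

theorem finrank_range_wedgeForm_basis :
    finrank ℂ (LinearMap.range (wedgeForm e (b 0))) = 6 := by
  rw [range_wedgeForm_basis, finrank_span_eq_card (linearIndependent_wedgeForm_basis_pairs e b),
    Fintype.card_fin]

end Basis

theorem rank_wedgeForm_eq_six
    (h5 : Module.finrank ℂ V = 5) (e : (⋀[ℂ]^5 V) ≃ₗ[ℂ] ℂ)
    (v : V) (hv : v ≠ 0) :
    Module.finrank ℂ (LinearMap.range (wedgeForm e v)) = 6 := by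
  obtain ⟨b, rfl⟩ := exists_basis_fin_succ_apply_zero h5 hv
  exact finrank_range_wedgeForm_basis e b

end Stmt0
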